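/- Let {(A_{i,ℓ}, A_{i,r}, A_{i,c})}_{i∈I} be a combinatorially free-free-Boolean independent family of triples of subalgebras of a noncommutative probability space (A,φ). Let ω : {1,…,n} → I, χ : {1,…,n} → {ℓ,r,c}, z_k ∈ A_{ω(k),χ(k)} for all k, and let ε = ker ω be the partition of {1,…,n} whose blocks are the level sets of ω. Then φ(z₁ ⋯ zₙ) = Σ_{σ ∈ IBNC(χ)} ( Σ_{π ∈ IBNC(χ), σ ≤ π ≤ ε} μ_{IBNC(χ)}(σ,π) ) φ_σ(z₁,…,zₙ). -/

import Mathlib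

namespace FFB

/-- The three letters ℓ, c, r labelling the faces. -/
inductive Letter : Type where
  | l | c | r
deriving DecidableEq

/-- `x` is one of the letters `ℓ`, `c`. -/
def isLC (x : Letter) : Prop := x = Letter.l ∨ x = Letter.c

variable {α : Type*}

/-- The total order `≺_χ` on the index set determined by `χ`:
the elements of `χ⁻¹{ℓ,c}` in increasing order followed by the elements of
`χ⁻¹{r}` in decreasing order. -/
def chiLT [LT α] (χ : α → Letter) (i j : α) : Prop :=
  (isLC (χ i) ∧ isLC (χ j) ∧ i < j)
  ∨ (isLC (χ i) ∧ χ j = Letter.r)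
  ∨ (χ i = Letter.r ∧ χ j = Letter.r ∧ j < i)

/-- A partition (equivalence relation) `π` is `χ`-noncrossing if there is no quadruple
`s₁ ≺_χ r₁ ≺_χ s₂ ≺_χ r₂` with `s₁ ∼ s₂`, `r₁ ∼ r₂` lying in different blocks. -/
def ChiNoncrossing [LT α] (χ : α → Letter) (π : Setoid α) : Prop :=
  ∀ s₁ r₁ s₂ r₂ : α, chiLT χ s₁ r₁ → chiLT χ r₁ s₂ → chiLT χ s₂ r₂ →
    π s₁ s₂ → π r₁ r₂ → π s₁ r₁

/-- A partition `π` is `χ`-interval if whenever `i < j < k`, `i ∼ k` and `χ j = c`,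
then `i, j, k` all lie in the same block. -/
def ChiInterval [LT α] (χ : α → Letter) (π : Setoid α) : Prop :=
  ∀ i j k : α, i < j → j < k → χ j = Letter.c → π i k → π i j

/-- The set of interval-bi-noncrossing partitions with respect to `χ`. -/
def IBNC [LT α] (χ : α → Letter) : Set (Setoid α) :=
  {π | ChiNoncrossing χ π ∧ ChiInterval χ π}

/-- The set of `χ`-noncrossing partitions. -/
def NC [LT α] (χ : α → Letter) : Set (Setoid α) :=
  {π | ChiNoncrossing χ π}

/-- Restriction of a partition of `α` to a subset `V ⊆ α`. -/
def restrict (V : Set α) (σ : Setoid α) : Setoid V := Setoid.comap Subtype.val σ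

/-- Restriction of `χ` to a subset `V ⊆ α`. -/
def restChi (V : Set α) (χ : α → Letter) : V → Letter := fun x => χ x.1

/- `mu` is the Möbius function of the finite poset `P` (with the induced order):
it is the (two-sided) convolution inverse of the zeta function. -/
open Classical in
def IsMobius {β : Type*} [PartialOrder β] (P : Set β) (mu : β → β → ℂ) : Prop :=
  ∀ a ∈ P, ∀ b ∈ P, a ≤ b →
    ((∑ᶠ c ∈ {c | c ∈ P ∧ a ≤ c ∧ c ≤ b}, mu a c) = if a = b then 1 else 0) ∧
    ((∑ᶠ c ∈ {c | c ∈ P ∧ a ≤ c ∧ c ≤ b}, mu c b) = if a = b then 1 else 0)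

section Moments

variable {A : Type*} [Ring A] [LinearOrder α] [Finite α]

/-- `φ_V(z₁,…,zₙ) = φ(z_{l₁} ⋯ z_{l_k})` where `V = {l₁ < ⋯ < l_k}`. -/
noncomputable def phiV (φ : A → ℂ) (z : α → A) (V : Set α) : ℂ :=
  φ (((Set.toFinite V).toFinset.sort (· ≤ ·)).map z).prod

/-- `φ_σ(z₁,…,zₙ) = ∏_{V ∈ σ} φ_V(z₁,…,zₙ)`. -/
noncomputable def phiPart (φ : A → ℂ) (z : α → A) (σ : Setoid α) : ℂ :=
  ∏ᶠ q : Quotient σ, phiV φ z {y | Quotient.mk σ y = q}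

/-- The free-free-Boolean cumulant
`κ_{χ,π}(z₁,…,zₙ) = Σ_{σ ∈ IBNC(χ), σ ≤ π} μ_{IBNC(χ)}(σ,π) φ_σ(z₁,…,zₙ)`,
where `mu` is (a function which is) the Möbius function of `IBNC(χ)`. -/
noncomputable def cum (φ : A → ℂ) (χ : α → Letter)
    (mu : Setoid α → Setoid α → ℂ) (z : α → A) (π : Setoid α) : ℂ :=
  ∑ᶠ σ ∈ {σ | σ ∈ IBNC χ ∧ σ ≤ π}, mu σ π * phiPart φ z σ

end Moments

/-- Combinatorial free-free-Boolean independence: mixed cumulants vanish.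
`F i x` is the face of the `i`-th triple labelled by the letter `x`. -/
def CombFFB {A : Type*} [Ring A] [Algebra ℂ A] (φ : A →ₗ[ℂ] ℂ) {I : Type*}
    (F : I → Letter → NonUnitalSubalgebra ℂ A) : Prop :=
  ∀ (n : ℕ) (χ : Fin n → Letter) (ω : Fin n → I) (z : Fin n → A),
    (∀ k, z k ∈ F (ω k) (χ k)) → (¬ ∃ i, ∀ k, ω k = i) →
    ∀ mu : Setoid (Fin n) → Setoid (Fin n) → ℂ, IsMobius (IBNC χ) mu →
      cum (⇑φ) χ mu z ⊤ = 0

end FFB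

/-!
Summing the cumulants `κ_{χ,π}` over all `π ∈ IBNC(χ)` and exchanging the two sums, the Möbius
relation at the top partition leaves only `φ_{1ₙ} = φ(z₁ ⋯ zₙ)`. If `B` is a block of `π`,
restriction to `B` and `Bᶜ` identifies every interval `[σ, π]` of `IBNC(χ)` with a product of two
intervals, so the Möbius function, and with it `κ_{χ,π}`, factors through `B` and `Bᶜ`. The factor
on `B` is the top cumulant of the letters in `B`, which vanishes by independence when `ω` is not
constant on `B`. Hence only the `π ≤ ker ω` contribute, and exchanging the sums back gives the
formula.
-/

namespace FFB

section Finsum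

variable {β γ M : Type*}

theorem finsum_mem_comm' [AddCommMonoid M] [Finite β] [Finite γ] {s : Set β} {t : β → Set γ}
    {s' : γ → Set β} {t' : Set γ} (h : ∀ x y, x ∈ s ∧ y ∈ t x ↔ x ∈ s' y ∧ y ∈ t')
    (f : β → γ → M) :
    ∑ᶠ x ∈ s, ∑ᶠ y ∈ t x, f x y = ∑ᶠ y ∈ t', ∑ᶠ x ∈ s' y, f x y := by
  simp only [finsum_mem_eq_finite_toFinset_sum _ (Set.toFinite _)]
  exact Finset.sum_comm' (by simpa only [Set.Finite.mem_toFinset] using h)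

theorem finsum_mem_prod_mul [CommSemiring M] {S : Set β} {T : Set γ} (hS : S.Finite)
    (hT : T.Finite) (f : β → M) (g : γ → M) :
    ∑ᶠ p ∈ S ×ˢ T, f p.1 * g p.2 = (∑ᶠ x ∈ S, f x) * ∑ᶠ y ∈ T, g y := by
  lift S to Finset β using hS
  lift T to Finset γ using hT
  rw [← Finset.coe_product]
  simp only [finsum_mem_coe_finset]
  rw [Finset.sum_mul_sum, Finset.sum_product]

end Finsum

section Mobius

open Classical

variable {β : Type*} [PartialOrder β]

theorem exists_isMobius [Finite β] (P : Set β) : ∃ mu : β → β → ℂ, IsMobius P mu := by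
  have : Fintype β := Fintype.ofFinite β
  have : LocallyFiniteOrder P := Fintype.toLocallyFiniteOrder
  have hIcc : ∀ a b : P,
      {c | c ∈ P ∧ (a : β) ≤ c ∧ c ≤ b} = Subtype.val '' (↑(Finset.Icc a b) : Set P) := by
    intro a b
    ext c
    simp only [Set.mem_ofPred_eq, Finset.coe_Icc, Set.mem_image, Set.mem_Icc, Subtype.exists,
      ← Subtype.coe_le_coe, exists_and_right, exists_eq_right]
    tauto
  refine ⟨fun a b => if h : a ∈ P ∧ b ∈ P then IncidenceAlgebra.mu ℂ (⟨a, h.1⟩ : P) ⟨b, h.2⟩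
    else 0, fun a ha b hb _ => ?_⟩
  simp only [hIcc ⟨a, ha⟩ ⟨b, hb⟩, finsum_mem_image Subtype.val_injective.injOn,
    finsum_mem_coe_finset, Subtype.coe_prop, ha, hb, and_self, dite_true]
  rw [IncidenceAlgebra.sum_Icc_mu_right, IncidenceAlgebra.sum_Icc_mu_left]
  simp only [Subtype.mk.injEq, and_self]

theorem eq_of_finsum_Icc_eq [Finite β] {P : Set β} {b : β} {f g : β → ℂ}
    (hf : ∀ a ∈ P, a ≤ b → ∑ᶠ c ∈ {c | c ∈ P ∧ a ≤ c ∧ c ≤ b}, f c = if a = b then 1 else 0)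
    (hg : ∀ a ∈ P, a ≤ b → ∑ᶠ c ∈ {c | c ∈ P ∧ a ≤ c ∧ c ≤ b}, g c = if a = b then 1 else 0)
    {a : β} (ha : a ∈ P) (hab : a ≤ b) : f a = g a := by
  induction a using WellFoundedGT.induction with
  | _ a ih =>
  have hsplit : {c | c ∈ P ∧ a ≤ c ∧ c ≤ b} = insert a {c | c ∈ P ∧ a < c ∧ c ≤ b} := by
    ext c
    constructor
    · rintro ⟨hc, hac, hcb⟩
      rcases hac.eq_or_lt with rfl | hac
      exacts [Or.inl rfl, Or.inr ⟨hc, hac, hcb⟩]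
    · rintro (rfl | ⟨hc, hac, hcb⟩)
      exacts [⟨ha, le_rfl, hab⟩, ⟨hc, hac.le, hcb⟩]
  have hrest : ∑ᶠ c ∈ {c | c ∈ P ∧ a < c ∧ c ≤ b}, f c
      = ∑ᶠ c ∈ {c | c ∈ P ∧ a < c ∧ c ≤ b}, g c :=
    finsum_mem_congr rfl fun c ⟨hc, hac, hcb⟩ => ih c hac hc hcb
  have hnot : a ∉ {c | c ∈ P ∧ a < c ∧ c ≤ b} := fun h => lt_irrefl a h.2.1
  have := (hf a ha hab).trans (hg a ha hab).symm
  rw [hsplit, finsum_mem_insert _ hnot (Set.toFinite _),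
    finsum_mem_insert _ hnot (Set.toFinite _), hrest] at this
  exact add_right_cancel this

theorem IsMobius.comp_orderIso {β' : Type*} [PartialOrder β'] {P : Set β} {mu : β → β → ℂ}
    (hmu : IsMobius P mu) (E : β' ≃o β) :
    IsMobius (E ⁻¹' P) (fun a b => mu (E a) (E b)) := by
  intro a ha b hb hab
  have hbij : ∀ a b : β', Set.BijOn E {c | c ∈ E ⁻¹' P ∧ a ≤ c ∧ c ≤ b}
      {c | c ∈ P ∧ E a ≤ c ∧ c ≤ E b} := fun a b => E.toEquiv.bijOn fun c => by
        simp only [Set.mem_preimage, Set.mem_ofPred_eq, OrderIso.coe_toEquiv, E.le_iff_le]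
  rw [finsum_mem_eq_of_bijOn E (hbij a b) (fun _ _ => rfl) (g := fun c => mu (E a) c),
    finsum_mem_eq_of_bijOn E (hbij a b) (fun _ _ => rfl) (g := fun c => mu c (E b))]
  obtain ⟨hleft, hright⟩ := hmu (E a) ha (E b) hb (E.monotone hab)
  exact ⟨hleft.trans (if_congr E.apply_eq_iff_eq rfl rfl),
    hright.trans (if_congr E.apply_eq_iff_eq rfl rfl)⟩

theorem IsMobius.finsum_mul_eq_top [OrderTop β] {P : Set β} {mu : β → β → ℂ}
    (hmu : IsMobius P mu) (htop : ⊤ ∈ P) (f : β → ℂ) :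
    ∑ᶠ a ∈ P, (∑ᶠ c ∈ {c | c ∈ P ∧ a ≤ c ∧ c ≤ ⊤}, mu a c) * f a = f ⊤ := by
  rw [finsum_mem_congr rfl fun a ha => by rw [(hmu a ha ⊤ htop le_top).1]]
  rw [finsum_mem_inter_support_eq' _ P {⊤} fun a ha => ?_, finsum_mem_singleton, if_pos rfl,
    one_mul]
  have : a = ⊤ := by_contra fun h => ha (by simp [h])
  simp [this, htop]

end Mobius

section Partitions

variable {α γ δ : Type*}

instance [Finite α] : Finite (Setoid α) :=
  Finite.of_injective (fun σ : Setoid α => (σ : α → α → Prop))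
    fun _ _ h => Setoid.ext fun x y => iff_of_eq (congrFun₂ h x y)

def Saturates (σ : Setoid α) (B : Set α) : Prop := ∀ x y, σ x y → (x ∈ B ↔ y ∈ B)

theorem Saturates.mono {σ π : Setoid α} {B : Set α} (hB : Saturates π B) (h : σ ≤ π) :
    Saturates σ B := fun x y hxy => hB x y (h hxy)

theorem Saturates.compl {σ : Setoid α} {B : Set α} (hB : Saturates σ B) : Saturates σ Bᶜ :=
  fun x y hxy => not_congr (hB x y hxy)

theorem saturates_setOf_rel (π : Setoid α) (x : α) : Saturates π {y | π x y} :=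
  fun _ _ h => ⟨fun hy => π.trans hy h, fun hz => π.trans hz (π.symm h)⟩

theorem restrict_mono (V : Set α) {σ π : Setoid α} (h : σ ≤ π) : restrict V σ ≤ restrict V π :=
  fun _ _ hxy => h hxy

def glue (B : Set α) (τ : Setoid B) (ρ : Setoid ↥Bᶜ) : Setoid α where
  r x y := (∃ hx : x ∈ B, ∃ hy : y ∈ B, τ ⟨x, hx⟩ ⟨y, hy⟩)
    ∨ (∃ hx : x ∈ Bᶜ, ∃ hy : y ∈ Bᶜ, ρ ⟨x, hx⟩ ⟨y, hy⟩)
  iseqv := by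
    refine ⟨fun x => ?_, ?_, ?_⟩
    · by_cases hx : x ∈ B
      exacts [Or.inl ⟨hx, hx, τ.refl _⟩, Or.inr ⟨hx, hx, ρ.refl _⟩]
    · rintro x y (⟨hx, hy, h⟩ | ⟨hx, hy, h⟩)
      exacts [Or.inl ⟨hy, hx, τ.symm h⟩, Or.inr ⟨hy, hx, ρ.symm h⟩]
    · rintro x y w (⟨hx, hy, h⟩ | ⟨hx, hy, h⟩) (⟨hy', hw, h'⟩ | ⟨hy', hw, h'⟩)
      exacts [Or.inl ⟨hx, hw, τ.trans h h'⟩, absurd hy hy', absurd hy' hy,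
        Or.inr ⟨hx, hw, ρ.trans h h'⟩]

variable {B : Set α}

theorem saturates_glue (τ : Setoid B) (ρ : Setoid ↥Bᶜ) : Saturates (glue B τ ρ) B := by
  rintro x y (⟨hx, hy, -⟩ | ⟨hx, hy, -⟩)
  exacts [iff_of_true hx hy, iff_of_false hx hy]

@[simp]
theorem restrict_glue_left (τ : Setoid B) (ρ : Setoid ↥Bᶜ) : restrict B (glue B τ ρ) = τ :=
  Setoid.ext fun x y => ⟨by rintro (⟨_, _, h⟩ | ⟨hx, _, _⟩); exacts [h, absurd x.2 hx],
    fun h => Or.inl ⟨x.2, y.2, h⟩⟩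

@[simp]
theorem restrict_glue_right (τ : Setoid B) (ρ : Setoid ↥Bᶜ) : restrict Bᶜ (glue B τ ρ) = ρ :=
  Setoid.ext fun x y => ⟨by rintro (⟨hx, _, _⟩ | ⟨_, _, h⟩); exacts [absurd hx x.2, h],
    fun h => Or.inr ⟨x.2, y.2, h⟩⟩

theorem glue_restrict {σ : Setoid α} (hσ : Saturates σ B) :
    glue B (restrict B σ) (restrict Bᶜ σ) = σ := by
  refine Setoid.ext fun x y => ⟨by rintro (⟨_, _, h⟩ | ⟨_, _, h⟩) <;> exact h, fun h => ?_⟩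
  by_cases hx : x ∈ B
  exacts [Or.inl ⟨hx, (hσ x y h).1 hx, h⟩, Or.inr ⟨hx, mt (hσ x y h).2 hx, h⟩]

theorem le_iff_restrict_le {σ π : Setoid α} (hσ : Saturates σ B) :
    σ ≤ π ↔ restrict B σ ≤ restrict B π ∧ restrict Bᶜ σ ≤ restrict Bᶜ π := by
  refine ⟨fun h => ⟨restrict_mono B h, restrict_mono Bᶜ h⟩, fun ⟨hB, hC⟩ x y hxy => ?_⟩
  by_cases hx : x ∈ B
  · exact hB (show restrict B σ ⟨x, hx⟩ ⟨y, (hσ x y hxy).1 hx⟩ from hxy)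
  · exact hC (show restrict Bᶜ σ ⟨x, hx⟩ ⟨y, mt (hσ x y hxy).2 hx⟩ from hxy)

theorem eq_iff_restrict_eq {σ π : Setoid α} (hσ : Saturates σ B) (hπ : Saturates π B) :
    σ = π ↔ restrict B σ = restrict B π ∧ restrict Bᶜ σ = restrict Bᶜ π := by
  refine ⟨fun h => h ▸ ⟨rfl, rfl⟩, fun ⟨hB, hC⟩ => le_antisymm ?_ ?_⟩
  · exact (le_iff_restrict_le hσ).2 ⟨hB.le, hC.le⟩
  · exact (le_iff_restrict_le hπ).2 ⟨hB.ge, hC.ge⟩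

theorem restrict_bot (V : Set α) : restrict V (⊥ : Setoid α) = ⊥ :=
  Setoid.ker_eq_bot_iff.2 Subtype.val_injective

def comapOrderIso (e : γ ≃ δ) : Setoid δ ≃o Setoid γ where
  toFun := Setoid.comap e
  invFun := Setoid.comap e.symm
  left_inv σ := Setoid.ext fun x y => by simp [Setoid.comap_rel]
  right_inv σ := Setoid.ext fun x y => by simp [Setoid.comap_rel]
  map_rel_iff' {σ π} := by
    refine ⟨fun h x y hxy => ?_, fun h _ _ hxy => h hxy⟩
    have := @h (e.symm x) (e.symm y) (show σ (e (e.symm x)) (e (e.symm y)) by simpa using hxy)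
    change π (e (e.symm x)) (e (e.symm y)) at this
    simpa using this

end Partitions

section IBNC

variable {α γ δ : Type*} [LinearOrder α] [LinearOrder γ] [LinearOrder δ]

theorem top_mem_IBNC (χ : α → Letter) : (⊤ : Setoid α) ∈ IBNC χ :=
  ⟨fun _ _ _ _ _ _ _ _ _ => trivial, fun _ _ _ _ _ _ _ => trivial⟩

theorem chiLT_comp {f : γ → α} (hf : StrictMono f) (χ : α → Letter) (i j : γ) :
    chiLT (χ ∘ f) i j ↔ chiLT χ (f i) (f j) := by
  simp only [chiLT, Function.comp_apply, hf.lt_iff_lt]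

theorem comap_mem_IBNC {f : γ → α} (hf : StrictMono f) {χ : α → Letter} {σ : Setoid α}
    (hσ : σ ∈ IBNC χ) : Setoid.comap f σ ∈ IBNC (χ ∘ f) := by
  refine ⟨fun s₁ r₁ s₂ r₂ h₁ h₂ h₃ hs hr => ?_, fun i j k hij hjk hc hik => ?_⟩
  · simp only [chiLT_comp hf] at h₁ h₂ h₃
    exact hσ.1 _ _ _ _ h₁ h₂ h₃ hs hr
  · exact hσ.2 _ _ _ (hf hij) (hf hjk) hc hik

theorem restrict_mem_IBNC {χ : α → Letter} {σ : Setoid α} (hσ : σ ∈ IBNC χ) (V : Set α) :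
    restrict V σ ∈ IBNC (restChi V χ) :=
  comap_mem_IBNC (Subtype.strictMono_coe _) hσ

theorem IBNC_comp_orderIso (e : γ ≃o δ) (χ : δ → Letter) :
    IBNC (χ ∘ e) = (comapOrderIso e.toEquiv).symm ⁻¹' IBNC χ := by
  ext σ
  constructor
  · intro h
    have hχ : (χ ∘ e) ∘ e.symm = χ := by ext; simp
    have := comap_mem_IBNC e.symm.strictMono h
    rw [hχ] at this
    exact this
  · intro h
    exact (comapOrderIso e.toEquiv).apply_symm_apply σ ▸ comap_mem_IBNC e.strictMono h

theorem mem_IBNC_of_restrict {χ : α → Letter} {σ π : Setoid α} {B : Set α} (hπ : π ∈ IBNC χ)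
    (hB : Saturates π B) (hσπ : σ ≤ π) (hσB : restrict B σ ∈ IBNC (restChi B χ))
    (hσC : restrict Bᶜ σ ∈ IBNC (restChi Bᶜ χ)) : σ ∈ IBNC χ := by
  have hσ := hB.mono hσπ
  refine ⟨fun s₁ r₁ s₂ r₂ h₁ h₂ h₃ hs hr => ?_, fun i j k hij hjk hc hik => ?_⟩
  · -- `π` is noncrossing, so all four points lie on the same side of `B`
    have hsr := hB _ _ (hπ.1 _ _ _ _ h₁ h₂ h₃ (hσπ hs) (hσπ hr))
    by_cases h : s₁ ∈ B
    · exact hσB.1 ⟨s₁, h⟩ ⟨r₁, hsr.1 h⟩ ⟨s₂, (hσ _ _ hs).1 h⟩ ⟨r₂, (hσ _ _ hr).1 (hsr.1 h)⟩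
        h₁ h₂ h₃ hs hr
    · exact hσC.1 ⟨s₁, h⟩ ⟨r₁, mt hsr.2 h⟩ ⟨s₂, mt (hσ _ _ hs).2 h⟩
        ⟨r₂, mt (hσ _ _ hr).2 (mt hsr.2 h)⟩ h₁ h₂ h₃ hs hr
  · have hB_ij := hB _ _ (hπ.2 _ _ _ hij hjk hc (hσπ hik))
    by_cases h : i ∈ B
    · exact hσB.2 ⟨i, h⟩ ⟨j, hB_ij.1 h⟩ ⟨k, (hσ _ _ hik).1 h⟩ hij hjk hc hik
    · exact hσC.2 ⟨i, h⟩ ⟨j, mt hB_ij.2 h⟩ ⟨k, mt (hσ _ _ hik).2 h⟩ hij hjk hc hik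

end IBNC

section Moments

variable {α γ A : Type*} [Ring A] [LinearOrder α] [LinearOrder γ] [Finite α] [Finite γ]
  (φ : A → ℂ) (z : α → A)

theorem phiV_comp {f : γ → α} (hf : StrictMono f) (s : Set γ) :
    phiV φ (z ∘ f) s = phiV φ z (f '' s) := by
  have hset : (Set.toFinite (f '' s)).toFinset
      = (Set.toFinite s).toFinset.map ⟨f, hf.injective⟩ := by
    ext; simp
  rw [phiV, phiV, hset, ← (hf.strictMonoOn _).map_finsetSort, List.map_map]
  rfl

/-- The blocks of the pull-back of `σ` along an embedding whose range is a union of blocks are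
the blocks of `σ` meeting that range. -/
theorem phiPart_comap {f : γ → α} (hf : StrictMono f) {σ : Setoid α}
    (hσ : Saturates σ (Set.range f)) :
    phiPart φ (z ∘ f) (Setoid.comap f σ)
      = ∏ᶠ q ∈ Set.range (Quotient.mk σ ∘ f), phiV φ z {y | Quotient.mk σ y = q} := by
  let g : Quotient (Setoid.comap f σ) → Quotient σ := Quotient.map f fun _ _ h => h
  have hg : Function.Injective g := by
    rintro ⟨x⟩ ⟨y⟩ h
    exact Quotient.sound (Quotient.exact h :)
  have hrange : Set.range g = Set.range (Quotient.mk σ ∘ f) :=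
    (Quotient.mk_surjective.range_comp g).symm
  rw [← hrange, finprod_mem_range hg, phiPart]
  refine finprod_congr fun q => Quotient.inductionOn q fun x => ?_
  change phiV φ (z ∘ f) {y | ⟦y⟧ = ⟦x⟧} = phiV φ z {w | ⟦w⟧ = ⟦f x⟧}
  rw [phiV_comp φ z hf]
  congr 1
  ext w
  simp only [Set.mem_image, Set.mem_ofPred_eq, Quotient.eq]
  constructor
  · rintro ⟨y, hy, rfl⟩
    exact hy
  · intro hw
    obtain ⟨y, rfl⟩ := (hσ _ _ hw).2 ⟨x, rfl⟩
    exact ⟨y, hw, rfl⟩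

theorem phiPart_eq_mul_of_saturates {σ : Setoid α} {B : Set α} (hσ : Saturates σ B) :
    phiPart φ z σ
      = phiPart φ (z ∘ (↑)) (restrict B σ) * phiPart φ (z ∘ (↑)) (restrict Bᶜ σ) := by
  rw [restrict, restrict,
    phiPart_comap φ z (Subtype.strictMono_coe _) (by rwa [Subtype.range_coe]),
    phiPart_comap φ z (Subtype.strictMono_coe _) (by rw [Subtype.range_coe]; exact hσ.compl),
    ← finprod_mem_union _ (Set.toFinite _) (Set.toFinite _)]
  · have hcover : Set.range (Quotient.mk σ ∘ ((↑) : B → α))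
        ∪ Set.range (Quotient.mk σ ∘ ((↑) : ↥Bᶜ → α)) = Set.univ :=
      Set.eq_univ_of_forall fun q => Quotient.inductionOn q fun x =>
        (em (x ∈ B)).imp (fun h => ⟨⟨x, h⟩, rfl⟩) (fun h => ⟨⟨x, h⟩, rfl⟩)
    rw [hcover, finprod_mem_univ, phiPart]
  · refine Set.disjoint_left.2 ?_
    rintro _ ⟨x, rfl⟩ ⟨y, hyx⟩
    exact y.2 ((hσ _ _ (Quotient.exact hyx)).2 x.2)

theorem phiPart_comap_orderIso (e : γ ≃o α) (σ : Setoid α) :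
    phiPart φ (z ∘ e) (Setoid.comap e σ) = phiPart φ z σ := by
  rw [phiPart_comap φ z e.strictMono (by simp [Saturates]),
    (Quotient.mk_surjective.comp e.surjective).range_eq, finprod_mem_univ, phiPart]

theorem phiPart_top_eq_prod_ofFn {n : ℕ} (hn : 0 < n) (z : Fin n → A) :
    phiPart φ z ⊤ = φ (List.ofFn z).prod := by
  have : Unique (Quotient (⊤ : Setoid (Fin n))) :=
    ⟨⟨Quotient.mk _ ⟨0, hn⟩⟩, fun q => Quotient.inductionOn q fun _ => Quotient.sound trivial⟩
  rw [phiPart, finprod_unique, phiV, Set.eq_univ_of_forall fun y => Subsingleton.elim _ _]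
  rw [Set.Finite.toFinset_univ, Fin.sort_univ, List.ofFn_eq_map]

end Moments

section Factorization

variable {α A : Type*} [Ring A] [LinearOrder α] [Finite α] {χ : α → Letter} {π : Setoid α}
  {B : Set α}

/-- Restriction to `B` and `Bᶜ` identifies the interval `[a, π]` of `IBNC χ` with a product of two
intervals. -/
theorem finsum_Icc_eq_mul_of_saturates (hπ : π ∈ IBNC χ) (hB : Saturates π B) {a : Setoid α}
    (ha : a ≤ π) (f : Setoid B → ℂ) (g : Setoid ↥Bᶜ → ℂ) :
    ∑ᶠ σ ∈ {σ | σ ∈ IBNC χ ∧ a ≤ σ ∧ σ ≤ π}, f (restrict B σ) * g (restrict Bᶜ σ)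
      = (∑ᶠ τ ∈ {τ | τ ∈ IBNC (restChi B χ) ∧ restrict B a ≤ τ ∧ τ ≤ restrict B π}, f τ)
        * ∑ᶠ ρ ∈ {ρ | ρ ∈ IBNC (restChi Bᶜ χ) ∧ restrict Bᶜ a ≤ ρ ∧ ρ ≤ restrict Bᶜ π}, g ρ := by
  rw [← finsum_mem_prod_mul (Set.toFinite _) (Set.toFinite _)]
  refine (finsum_mem_eq_of_bijOn (fun p => glue B p.1 p.2) ⟨?_, ?_, ?_⟩ fun p _ => by simp).symm
  · rintro ⟨τ, ρ⟩ ⟨⟨hτ, haτ, hτπ⟩, hρ, haρ, hρπ⟩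
    have hle : glue B τ ρ ≤ π :=
      (le_iff_restrict_le (saturates_glue τ ρ)).2 (by simpa using ⟨hτπ, hρπ⟩)
    refine ⟨mem_IBNC_of_restrict hπ hB hle (by simpa using hτ) (by simpa using hρ), ?_, hle⟩
    exact (le_iff_restrict_le (hB.mono ha)).2 (by simpa using ⟨haτ, haρ⟩)
  · rintro ⟨τ, ρ⟩ - ⟨τ', ρ'⟩ - h
    simpa using And.intro (congrArg (restrict B) h) (congrArg (restrict Bᶜ) h)
  · rintro σ ⟨hσ, haσ, hσπ⟩
    exact ⟨(restrict B σ, restrict Bᶜ σ),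
      ⟨⟨restrict_mem_IBNC hσ B, restrict_mono B haσ, restrict_mono B hσπ⟩,
        restrict_mem_IBNC hσ Bᶜ, restrict_mono Bᶜ haσ, restrict_mono Bᶜ hσπ⟩,
      glue_restrict (hB.mono hσπ)⟩

open Classical in
theorem mu_eq_mul_of_saturates {mu : Setoid α → Setoid α → ℂ} {muB : Setoid B → Setoid B → ℂ}
    {muC : Setoid ↥Bᶜ → Setoid ↥Bᶜ → ℂ} (hmu : IsMobius (IBNC χ) mu)
    (hmuB : IsMobius (IBNC (restChi B χ)) muB) (hmuC : IsMobius (IBNC (restChi Bᶜ χ)) muC)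
    (hπ : π ∈ IBNC χ) (hB : Saturates π B) {σ : Setoid α} (hσ : σ ∈ IBNC χ) (hσπ : σ ≤ π) :
    mu σ π = muB (restrict B σ) (restrict B π) * muC (restrict Bᶜ σ) (restrict Bᶜ π) := by
  refine eq_of_finsum_Icc_eq (g := fun σ => muB (restrict B σ) (restrict B π)
    * muC (restrict Bᶜ σ) (restrict Bᶜ π)) (fun a ha hab => (hmu a ha π hπ hab).2)
    (fun a ha hab => ?_) hσ hσπ
  rw [finsum_Icc_eq_mul_of_saturates hπ hB hab (fun τ => muB τ (restrict B π))
      (fun ρ => muC ρ (restrict Bᶜ π)),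
    (hmuB _ (restrict_mem_IBNC ha B) _ (restrict_mem_IBNC hπ B) (restrict_mono B hab)).2,
    (hmuC _ (restrict_mem_IBNC ha Bᶜ) _ (restrict_mem_IBNC hπ Bᶜ) (restrict_mono Bᶜ hab)).2,
    ite_zero_mul_ite_zero, one_mul]
  exact if_congr (eq_iff_restrict_eq (hB.mono hab) hB).symm rfl rfl

theorem cum_eq_mul_of_saturates (φ : A → ℂ) (z : α → A) {mu : Setoid α → Setoid α → ℂ}
    {muB : Setoid B → Setoid B → ℂ} {muC : Setoid ↥Bᶜ → Setoid ↥Bᶜ → ℂ}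
    (hmu : IsMobius (IBNC χ) mu) (hmuB : IsMobius (IBNC (restChi B χ)) muB)
    (hmuC : IsMobius (IBNC (restChi Bᶜ χ)) muC) (hπ : π ∈ IBNC χ) (hB : Saturates π B) :
    cum φ χ mu z π = cum φ (restChi B χ) muB (z ∘ (↑)) (restrict B π)
      * cum φ (restChi Bᶜ χ) muC (z ∘ (↑)) (restrict Bᶜ π) := by
  have key := finsum_Icc_eq_mul_of_saturates hπ hB bot_le
    (fun τ => muB τ (restrict B π) * phiPart φ (z ∘ (↑)) τ)
    (fun ρ => muC ρ (restrict Bᶜ π) * phiPart φ (z ∘ (↑)) ρ)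
  simp only [restrict_bot, bot_le, true_and] at key
  rw [cum, cum, cum, ← key]
  refine finsum_mem_congr rfl fun σ ⟨hσ, hσπ⟩ => ?_
  rw [mu_eq_mul_of_saturates hmu hmuB hmuC hπ hB hσ hσπ,
    phiPart_eq_mul_of_saturates φ z (hB.mono hσπ)]
  ring

end Factorization

section Independence

variable {α γ A : Type*} [Ring A] [LinearOrder α] [LinearOrder γ] [Finite α] [Finite γ]

theorem cum_comap_orderIso (φ : A → ℂ) (z : α → A) (e : γ ≃o α) (χ : α → Letter)
    (mu : Setoid α → Setoid α → ℂ) (π : Setoid α) :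
    cum φ (χ ∘ e) (fun a b => mu ((comapOrderIso e.toEquiv).symm a)
      ((comapOrderIso e.toEquiv).symm b)) (z ∘ e) (comapOrderIso e.toEquiv π)
      = cum φ χ mu z π := by
  refine (finsum_mem_eq_of_bijOn _ ((comapOrderIso e.toEquiv).toEquiv.bijOn fun σ => ?_)
    fun σ _ => ?_).symm
  · simp [IBNC_comp_orderIso]
  · simp only [OrderIso.coe_toEquiv, OrderIso.symm_apply_apply]
    exact congrArg (mu σ π * ·) (phiPart_comap_orderIso φ z e σ).symm

theorem CombFFB.cum_top_eq_zero [Algebra ℂ A] {φ : A →ₗ[ℂ] ℂ} {I : Type*}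
    {F : I → Letter → NonUnitalSubalgebra ℂ A} (hF : CombFFB φ F) {χ : α → Letter}
    {ω : α → I} {z : α → A} (hz : ∀ k, z k ∈ F (ω k) (χ k)) (hω : ¬ ∃ i, ∀ k, ω k = i)
    {mu : Setoid α → Setoid α → ℂ} (hmu : IsMobius (IBNC χ) mu) : cum φ χ mu z ⊤ = 0 := by
  have : Fintype α := Fintype.ofFinite α
  let e := Fintype.orderIsoFinOfCardEq α rfl
  rw [← cum_comap_orderIso φ z e χ mu ⊤, OrderIso.map_top]
  refine hF _ (χ ∘ e) (ω ∘ e) (z ∘ e) (fun k => hz (e k))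
    (fun ⟨i, hi⟩ => hω ⟨i, fun k => by simpa using hi (e.symm k)⟩) _ ?_
  rw [IBNC_comp_orderIso]
  exact hmu.comp_orderIso _

theorem cum_eq_zero_of_not_le_ker [Algebra ℂ A] {φ : A →ₗ[ℂ] ℂ} {I : Type*}
    {F : I → Letter → NonUnitalSubalgebra ℂ A} (hF : CombFFB φ F) {χ : α → Letter}
    {ω : α → I} {z : α → A} (hz : ∀ k, z k ∈ F (ω k) (χ k))
    {mu : Setoid α → Setoid α → ℂ} (hmu : IsMobius (IBNC χ) mu) {π : Setoid α}
    (hπ : π ∈ IBNC χ) (hπω : ¬ π ≤ Setoid.ker ω) : cum φ χ mu z π = 0 := by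
  obtain ⟨x, y, hxy, hωxy⟩ : ∃ x y, π x y ∧ ω x ≠ ω y := by
    by_contra! h
    exact hπω fun x y hxy => h x y hxy
  set B := {w | π x w}
  obtain ⟨muB, hmuB⟩ := exists_isMobius (IBNC (restChi B χ))
  obtain ⟨muC, hmuC⟩ := exists_isMobius (IBNC (restChi Bᶜ χ))
  have hBtop : restrict B π = ⊤ := eq_top_iff.2 fun u v _ => π.trans (π.symm u.2) v.2
  rw [cum_eq_mul_of_saturates φ z hmu hmuB hmuC hπ (saturates_setOf_rel π x), hBtop,
    hF.cum_top_eq_zero (χ := restChi B χ) (ω := ω ∘ (↑)) (z := z ∘ (↑)) (fun k => hz k) ?_ hmuB,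
    zero_mul]
  rintro ⟨i, hi⟩
  exact hωxy ((hi ⟨x, π.refl x⟩).trans (hi ⟨y, hxy⟩).symm)

theorem finsum_cum_eq (φ : A → ℂ) (χ : α → Letter) (mu : Setoid α → Setoid α → ℂ) (z : α → A)
    (p : Setoid α → Prop) :
    ∑ᶠ π ∈ {π | π ∈ IBNC χ ∧ p π}, cum φ χ mu z π
      = ∑ᶠ σ ∈ IBNC χ, (∑ᶠ π ∈ {π | π ∈ IBNC χ ∧ σ ≤ π ∧ p π}, mu σ π) * phiPart φ z σ := by
  simp only [cum, finsum_mem_mul]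
  exact finsum_mem_comm' (fun π σ => by simp only [Set.mem_ofPred_eq]; tauto) _

end Independence

theorem moments_of_combinatorially_independent_general {A : Type*} [Ring A] [Algebra ℂ A]
    (φ : A →ₗ[ℂ] ℂ) {I : Type*}
    (F : I → Letter → NonUnitalSubalgebra ℂ A) (hF : CombFFB φ F)
    (n : ℕ) (hn : 0 < n) (χ : Fin n → Letter) (ω : Fin n → I)
    (z : Fin n → A) (hz : ∀ k, z k ∈ F (ω k) (χ k))
    (mu : Setoid (Fin n) → Setoid (Fin n) → ℂ) (hmu : IsMobius (IBNC χ) mu) :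
    φ (List.ofFn z).prod =
      ∑ᶠ σ ∈ IBNC χ,
        (∑ᶠ π ∈ {π | π ∈ IBNC χ ∧ σ ≤ π ∧ π ≤ Setoid.ker ω}, mu σ π) *
          phiPart (⇑φ) z σ := by
  calc φ (List.ofFn z).prod = phiPart φ z ⊤ := (phiPart_top_eq_prod_ofFn φ hn z).symm
    _ = ∑ᶠ σ ∈ IBNC χ, (∑ᶠ π ∈ {π | π ∈ IBNC χ ∧ σ ≤ π ∧ π ≤ ⊤}, mu σ π) * phiPart φ z σ :=
      (hmu.finsum_mul_eq_top (top_mem_IBNC χ) _).symm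
    _ = ∑ᶠ π ∈ {π | π ∈ IBNC χ ∧ π ≤ ⊤}, cum φ χ mu z π := (finsum_cum_eq _ _ _ _ _).symm
    _ = ∑ᶠ π ∈ {π | π ∈ IBNC χ ∧ π ≤ Setoid.ker ω}, cum φ χ mu z π :=
      finsum_mem_inter_support_eq' _ _ _ fun π hπ =>
        ⟨fun h => ⟨h.1, by_contra fun hω => hπ (cum_eq_zero_of_not_le_ker hF hz hmu h.1 hω)⟩,
          fun h => ⟨h.1, le_top⟩⟩
    _ = _ := finsum_cum_eq _ _ _ _ _

/-- For a combinatorially free-free-Boolean independent family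
`{(A_{i,ℓ}, A_{i,r}, A_{i,c})}_{i∈I}` in `(A,φ)`, with `z_k ∈ A_{ω(k),χ(k)}` and
`ε = ker ω`, the mixed moments are given by
`φ(z₁ ⋯ zₙ) = Σ_{σ ∈ IBNC(χ)} ( Σ_{π ∈ IBNC(χ), σ ≤ π ≤ ε} μ_{IBNC(χ)}(σ,π) ) φ_σ(z)`. -/
theorem moments_of_combinatorially_independent {A : Type*} [Ring A] [Algebra ℂ A]
    (φ : A →ₗ[ℂ] ℂ) (hφ : φ 1 = 1) {I : Type*}
    (F : I → Letter → NonUnitalSubalgebra ℂ A) (hF : CombFFB φ F)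
    (n : ℕ) (hn : 0 < n) (χ : Fin n → Letter) (ω : Fin n → I)
    (z : Fin n → A) (hz : ∀ k, z k ∈ F (ω k) (χ k))
    (mu : Setoid (Fin n) → Setoid (Fin n) → ℂ) (hmu : IsMobius (IBNC χ) mu) :
    φ (List.ofFn z).prod =
      ∑ᶠ σ ∈ IBNC χ,
        (∑ᶠ π ∈ {π | π ∈ IBNC χ ∧ σ ≤ π ∧ π ≤ Setoid.ker ω}, mu σ π) *
          phiPart (⇑φ) z σ :=
  moments_of_combinatorially_independent_general φ F hF n hn χ ω z hz mu hmu

end FFB
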